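/- arXiv:2010.15511 — 7 statements merged into one kernel-verified Lean document; each statement's English description precedes it below -/
import Mathlib

section
/- Let λ ∈ ℝ^p with 0 ≤ λ₁ ≤ ... ≤ λ_p, λ ≠ 0, and r > 0. The minimum of ∑_{i=1}^p λ_i β_i over the set B = {β : ‖β‖₂ = r, 0 ≤ β₁ ≤ ... ≤ β_p} equals the minimum over i = 1,...,p of ⟨λ, r·b_i⟩, where b_i = (0,...,0, 1/√i, ..., 1/√i) has its last i coordinates equal to 1/√i. -/
open Finset

noncomputable def bvec (p : ℕ) (i : Fin p) : Fin p → ℝ :=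
  fun j => if p ≤ (j : ℕ) + (i : ℕ) + 1 then 1 / Real.sqrt ((i : ℕ) + 1) else 0

/-!
A monotone nonnegative vector `β` is a nonnegative combination `∑ cᵢ bᵢ` of the unit vectors `bᵢ`
(the coefficients are the increments of `β`, rescaled). If `‖β‖ = r`, the triangle inequality gives
`∑ cᵢ ≥ r`, so `⟪λ, β⟫ = ∑ (cᵢ / r) ⟪λ, r bᵢ⟫ ≥ minᵢ ⟪λ, r bᵢ⟫`, as this minimum is nonnegative for
`λ ≥ 0`. The minimum is attained at `β = r bᵢ`.
-/

theorem LinearMap.le_apply_sum_smul_of_le_apply_smul {ι E : Type*} [Fintype ι]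
    [SeminormedAddCommGroup E] [NormedSpace ℝ E] (L : E →ₗ[ℝ] ℝ) {u : ι → E}
    (hu : ∀ i, ‖u i‖ ≤ 1) {c : ι → ℝ} (hc : ∀ i, 0 ≤ c i) {r m : ℝ} (hr : 0 < r)
    (hnorm : ‖∑ i, c i • u i‖ = r) (hm : 0 ≤ m) (hmu : ∀ i, m ≤ L (r • u i)) :
    m ≤ L (∑ i, c i • u i) := by
  have hsum : r ≤ ∑ i, c i := calc
    r = ‖∑ i, c i • u i‖ := hnorm.symm
    _ ≤ ∑ i, ‖c i • u i‖ := norm_sum_le _ _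
    _ ≤ ∑ i, c i := sum_le_sum fun i _ => by
        rw [norm_smul, Real.norm_of_nonneg (hc i)]
        exact mul_le_of_le_one_right (hc i) (hu i)
  refine le_of_mul_le_mul_left ?_ hr
  calc r * m ≤ (∑ i, c i) * m := mul_le_mul_of_nonneg_right hsum hm
    _ = ∑ i, c i * m := sum_mul _ _ _
    _ ≤ ∑ i, c i * L (r • u i) := sum_le_sum fun i _ => mul_le_mul_of_nonneg_left (hmu i) (hc i)
    _ = r * L (∑ i, c i • u i) := by
        simp only [map_sum, map_smul, smul_eq_mul, mul_sum]
        exact sum_congr rfl fun i _ => by ring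

theorem Fin.sum_sub_vecCons_zero_mul_ite_le {n : ℕ} (β : Fin n → ℝ) (j : Fin n) :
    ∑ k, (β k - Matrix.vecCons 0 β k.castSucc) * (if k ≤ j then 1 else 0) = β j := by
  simp only [mul_ite, mul_one, mul_zero, ← sum_filter, filter_ge_eq_Iic]
  simpa using Fin.sum_Iic_sub j (Matrix.vecCons 0 β)

theorem Monotone.vecCons_castSucc_le {n : ℕ} {β : Fin n → ℝ} (hβ : Monotone β) (h0 : ∀ i, 0 ≤ β i)
    (k : Fin n) : Matrix.vecCons 0 β k.castSucc ≤ β k := by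
  cases n with
  | zero => exact k.elim0
  | succ n => exact (hβ.vecCons (h0 0)) (Fin.castSucc_le_succ k)

theorem bvec_apply {p : ℕ} (i j : Fin p) :
    bvec p i j = (Real.sqrt ((i : ℕ) + 1))⁻¹ * if i.rev ≤ j then 1 else 0 := by
  have : i.rev ≤ j ↔ p ≤ (j : ℕ) + (i : ℕ) + 1 := by
    rw [Fin.le_def, Fin.val_rev]; omega
  simp only [bvec, this, one_div, mul_ite, mul_one, mul_zero]

theorem exists_nonneg_eq_sum_smul_bvec {p : ℕ} {β : Fin p → ℝ} (hβ : Monotone β)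
    (h0 : ∀ i, 0 ≤ β i) : ∃ c : Fin p → ℝ, (∀ i, 0 ≤ c i) ∧ β = ∑ i, c i • bvec p i := by
  set d : Fin p → ℝ := fun k => β k - Matrix.vecCons 0 β k.castSucc
  refine ⟨fun i => Real.sqrt ((i : ℕ) + 1) * d i.rev, fun i => ?_, funext fun j => ?_⟩
  · have := sub_nonneg.2 (hβ.vecCons_castSucc_le h0 i.rev)
    positivity
  · have hsqrt (i : Fin p) : Real.sqrt ((i : ℕ) + 1) ≠ 0 := by positivity
    simp only [Finset.sum_apply, Pi.smul_apply, smul_eq_mul, bvec_apply]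
    rw [← Fin.sum_sub_vecCons_zero_mul_ite_le β j, ← Equiv.sum_comp Fin.revPerm]
    refine sum_congr rfl fun i _ => ?_
    simp only [Fin.revPerm_apply, d]
    field_simp [hsqrt i]

theorem bvec_nonneg (p : ℕ) (i j : Fin p) : 0 ≤ bvec p i j := by
  rw [bvec_apply]; positivity

theorem monotone_bvec (p : ℕ) (i : Fin p) : Monotone (bvec p i) := fun a b hab => by
  simp only [bvec_apply]
  gcongr
  split_ifs with ha hb <;> grind

theorem sum_bvec_sq (p : ℕ) (i : Fin p) : ∑ j, bvec p i j ^ 2 = 1 := by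
  have hpos : (0 : ℝ) < (i : ℕ) + 1 := by positivity
  simp only [bvec_apply, mul_pow, inv_pow, Real.sq_sqrt hpos.le, ite_pow, one_pow,
    zero_pow two_ne_zero, ← mul_sum, sum_boole, filter_le_eq_Ici, Fin.card_Ici, Fin.val_rev]
  rw [Nat.sub_sub_self i.isLt, Nat.cast_add_one, inv_mul_cancel₀ hpos.ne']

theorem norm_toLp_bvec (p : ℕ) (i : Fin p) : ‖WithLp.toLp 2 (bvec p i)‖ = 1 := by
  simp [EuclideanSpace.norm_eq, sum_bvec_sq]

theorem stmt2_general {p : ℕ} (hp : 0 < p) (lam : Fin p → ℝ)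
    (hnonneg : ∀ i, 0 ≤ lam i) (r : ℝ) (hr : 0 < r) :
    IsLeast {v : ℝ | ∃ β : Fin p → ℝ, Real.sqrt (∑ i, (β i) ^ 2) = r ∧
        Monotone β ∧ (∀ i, 0 ≤ β i) ∧ v = ∑ i, lam i * β i}
      (Finset.univ.inf' (Finset.univ_nonempty_iff.mpr (Fin.pos_iff_nonempty.mp hp))
        fun i => ∑ j, lam j * (r * bvec p i j)) := by
  set L := innerₛₗ ℝ (WithLp.toLp 2 lam)
  have hL (x : Fin p → ℝ) : L (WithLp.toLp 2 x) = ∑ i, lam i * x i := by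
    simp [L, PiLp.inner_apply, mul_comm]
  obtain ⟨i₀, -, hi₀⟩ := exists_mem_eq_inf' (univ_nonempty_iff.mpr (Fin.pos_iff_nonempty.mp hp))
    fun i => ∑ j, lam j * (r * bvec p i j)
  refine ⟨⟨r • bvec p i₀, ?_, (monotone_bvec p i₀).const_smul hr.le,
    fun j => smul_nonneg hr.le (bvec_nonneg p i₀ j), hi₀⟩, ?_⟩
  · simp [mul_pow, ← mul_sum, sum_bvec_sq, hr.le]
  rintro v ⟨β, hnorm, hβ, h0, rfl⟩
  obtain ⟨c, hc, rfl⟩ := exists_nonneg_eq_sum_smul_bvec hβ h0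
  have hlift : WithLp.toLp 2 (∑ i, c i • bvec p i) = ∑ i, c i • WithLp.toLp 2 (bvec p i) := by
    simp
  rw [← hL, hlift]
  refine L.le_apply_sum_smul_of_le_apply_smul (fun i => (norm_toLp_bvec p i).le) hc hr ?_
    (le_inf' _ _ fun i _ => ?_) fun i => ?_
  · rw [← hlift, EuclideanSpace.norm_eq]
    simpa using hnorm
  · exact sum_nonneg fun j _ => mul_nonneg (hnonneg j) (mul_nonneg hr.le (bvec_nonneg p i j))
  · rw [← WithLp.toLp_smul, hL]
    exact inf'_le _ (mem_univ i)

theorem stmt2 {p : ℕ} (hp : 0 < p) (lam : Fin p → ℝ) (hmono : Monotone lam)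
    (hnonneg : ∀ i, 0 ≤ lam i) (r : ℝ) (hr : 0 < r) :
    IsLeast {v : ℝ | ∃ β : Fin p → ℝ, Real.sqrt (∑ i, (β i) ^ 2) = r ∧
        Monotone β ∧ (∀ i, 0 ≤ β i) ∧ v = ∑ i, lam i * β i}
      (Finset.univ.inf' (Finset.univ_nonempty_iff.mpr (Fin.pos_iff_nonempty.mp hp))
        fun i => ∑ j, lam j * (r * bvec p i j)) :=
  stmt2_general hp lam hnonneg r hr
end

section
/- Define ρ_p = √(∑_{i=1}^p (√i − √(i−1))²). For any nondecreasing nonnegative weight vector λ ≠ 0 and any r > 0, the ratio (max_{‖β‖=r} ∑ λ_i |β|_(i)) / (min_{‖β‖=r} ∑ λ_i |β|_(i)) is at least ρ_p, with equality if and only if λ is a positive scalar multiple of the quasi-spherical OSCAR sequence λ^QS_i = √(p−i+1) − √(p−i) assigned to sorted absolute values (equivalently, weight √j − √(j−1) on the j-th largest absolute value). -/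
open Finset

noncomputable def sortedAbs {p : ℕ} (β : Fin p → ℝ) : Fin p → ℝ :=
  fun i => |β (Tuple.sort (fun j => |β j|) i)|

noncomputable def slopePen {p : ℕ} (lam β : Fin p → ℝ) : ℝ :=
  ∑ i, lam i * sortedAbs β i

noncomputable def lamQS (p : ℕ) : Fin p → ℝ :=
  fun i => Real.sqrt ((p : ℝ) - (i : ℕ)) - Real.sqrt ((p : ℝ) - (i : ℕ) - 1)

noncomputable def rho (p : ℕ) : ℝ :=
  Real.sqrt (∑ i ∈ Finset.range p, (Real.sqrt (i + 1) - Real.sqrt i) ^ 2)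

/-!
Write `μ j` for the weight of the `j`-th largest `|β i|` and `t j` for that value, so that
`slopePen lam β = ∑ μ j * t j` with `t` antitone. Cauchy–Schwarz makes the maximum `r * ‖lam‖`,
attained at `β ∝ lam`. Abel summation shows that `∑ μ j * t j` is monotone in the partial sums
`∑ j < k, μ j` (the increments `t k - t (k + 1)` are nonnegative). Hence if `a * √k` minorizes
them then `slopePen lam β ≥ a * ∑ (√(j+1) - √j) * t j ≥ a * ‖t‖`, while spreading `β` evenly over
the `k` largest weights shows that the minimum is `r * a` for the largest such `a`. Comparing
`μ` with `a * (√(j+1) - √j)` in the same way gives `a * ρ² ≤ ⟪μ, √(j+1) - √j⟫ ≤ ‖lam‖ * ρ`,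
and equality throughout forces `μ j = a * (√(j+1) - √j)`.
-/

noncomputable def sqrtGap (j : ℕ) : ℝ := √(j + 1) - √j

lemma sqrtGap_eq_inv (j : ℕ) : sqrtGap j = (√(j + 1) + √j)⁻¹ := by
  refine eq_inv_of_mul_eq_one_left ?_
  have h1 := Real.sq_sqrt (by positivity : (0 : ℝ) ≤ j + 1)
  have h0 := Real.sq_sqrt (Nat.cast_nonneg (α := ℝ) j)
  rw [sqrtGap]; linear_combination h1 - h0

lemma sqrtGap_nonneg (j : ℕ) : 0 ≤ sqrtGap j := by
  rw [sqrtGap_eq_inv]; positivity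

lemma antitone_sqrtGap : Antitone sqrtGap := by
  refine antitone_nat_of_succ_le fun j => ?_
  rw [sqrtGap_eq_inv, sqrtGap_eq_inv]
  refine inv_anti₀ (by positivity) (add_le_add ?_ ?_) <;>
    exact Real.sqrt_le_sqrt (by push_cast; linarith)

lemma sum_range_sqrtGap (k : ℕ) : ∑ j ∈ range k, sqrtGap j = √k := by
  simpa [sqrtGap] using sum_range_sub (fun n : ℕ => √n) k

lemma rho_sq (p : ℕ) : rho p ^ 2 = ∑ j ∈ range p, sqrtGap j ^ 2 :=
  Real.sq_sqrt (by positivity)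

lemma rho_pos {p : ℕ} (hp : 0 < p) : 0 < rho p := by
  refine Real.sqrt_pos.2 (sum_pos' (fun j _ => sq_nonneg _) ⟨0, mem_range.2 hp, ?_⟩)
  norm_num

lemma sum_range_mul_by_parts (μ t : ℕ → ℝ) (n : ℕ) :
    ∑ j ∈ range n, μ j * t j =
      ∑ k ∈ range n, (t k - t (k + 1)) * ∑ j ∈ range (k + 1), μ j +
        t n * ∑ j ∈ range n, μ j := by
  induction n with
  | zero => simp
  | succ n ih => simp only [sum_range_succ _ n, ih]; ring

lemma sum_range_mul_le_of_sum_range_le {μ ν t : ℕ → ℝ} {p : ℕ}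
    (h : ∀ k ≤ p, ∑ j ∈ range k, μ j ≤ ∑ j ∈ range k, ν j) (ht : Antitone t) (htp : 0 ≤ t p) :
    ∑ j ∈ range p, μ j * t j ≤ ∑ j ∈ range p, ν j * t j := by
  rw [sum_range_mul_by_parts μ, sum_range_mul_by_parts ν]
  refine add_le_add (sum_le_sum fun k hk => ?_) ?_
  · exact mul_le_mul_of_nonneg_left (h _ (mem_range.1 hk)) (sub_nonneg.2 (ht k.le_succ))
  · exact mul_le_mul_of_nonneg_left (h p le_rfl) htp

lemma sqrt_sum_sq_le_sum_sqrtGap_mul {t : ℕ → ℝ} {p : ℕ} (ht : Antitone t) (htp : 0 ≤ t p) :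
    √(∑ j ∈ range p, t j ^ 2) ≤ ∑ j ∈ range p, sqrtGap j * t j := by
  set T := √(∑ j ∈ range p, t j ^ 2)
  have hpartial : ∀ k ≤ p, ∑ j ∈ range k, t j ≤ ∑ j ∈ range k, T * sqrtGap j := by
    intro k hk
    rw [← mul_sum, sum_range_sqrtGap, mul_comm]
    calc ∑ j ∈ range k, t j = ∑ j ∈ range k, 1 * t j := by simp
      _ ≤ √(∑ j ∈ range k, 1 ^ 2) * √(∑ j ∈ range k, t j ^ 2) :=
        Real.sum_mul_le_sqrt_mul_sqrt _ _ _
      _ ≤ √k * T := by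
        simp only [one_pow, sum_const, card_range, nsmul_eq_mul, mul_one]
        gcongr
        exact Real.sqrt_le_sqrt <|
          sum_le_sum_of_subset_of_nonneg (range_subset_range.2 hk) fun j _ _ => sq_nonneg (t j)
  have hsq : T ^ 2 ≤ T * ∑ j ∈ range p, sqrtGap j * t j := by
    rw [Real.sq_sqrt (by positivity), mul_sum]
    simpa only [sq, mul_assoc] using sum_range_mul_le_of_sum_range_le hpartial ht htp
  have hX : 0 ≤ ∑ j ∈ range p, sqrtGap j * t j := sum_nonneg fun j hj =>
    mul_nonneg (sqrtGap_nonneg j) (htp.trans (ht (mem_range.1 hj).le))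
  nlinarith [Real.sqrt_nonneg (∑ j ∈ range p, t j ^ 2)]

def sqrtMinorants (μ : ℕ → ℝ) (p : ℕ) : Set ℝ :=
  {a | 0 ≤ a ∧ ∀ k ≤ p, a * √k ≤ ∑ j ∈ range k, μ j}

section sqrtMinorants

variable {μ : ℕ → ℝ} {p : ℕ} {a : ℝ}

lemma div_sqrt_mem_sqrtMinorants (hμ : ∀ j, 0 ≤ μ j) :
    μ 0 / √p ∈ sqrtMinorants μ p := by
  refine ⟨div_nonneg (hμ 0) (Real.sqrt_nonneg _), fun k hk => ?_⟩
  rcases k.eq_zero_or_pos with rfl | hk0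
  · simp
  calc μ 0 / √p * √k = μ 0 * (√k / √p) := by ring
    _ ≤ μ 0 * 1 := by
      gcongr
      · exact hμ 0
      · exact div_le_one_of_le₀ (Real.sqrt_le_sqrt (Nat.cast_le.2 hk)) (Real.sqrt_nonneg _)
    _ = ∑ j ∈ range 1, μ j := by simp
    _ ≤ ∑ j ∈ range k, μ j :=
      sum_le_sum_of_subset_of_nonneg (range_subset_range.2 hk0) fun j _ _ => hμ j

lemma mul_sum_sqrtGap_mul_le (ha : a ∈ sqrtMinorants μ p) {t : ℕ → ℝ} (ht : Antitone t)
    (htp : 0 ≤ t p) : a * ∑ j ∈ range p, sqrtGap j * t j ≤ ∑ j ∈ range p, μ j * t j := by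
  have h : ∀ k ≤ p, ∑ j ∈ range k, a * sqrtGap j ≤ ∑ j ∈ range k, μ j := fun k hk => by
    rw [← mul_sum, sum_range_sqrtGap]; exact ha.2 k hk
  simpa only [mul_sum, mul_assoc] using sum_range_mul_le_of_sum_range_le h ht htp

lemma mul_sqrt_sum_sq_le (ha : a ∈ sqrtMinorants μ p) {t : ℕ → ℝ} (ht : Antitone t)
    (htp : 0 ≤ t p) : a * √(∑ j ∈ range p, t j ^ 2) ≤ ∑ j ∈ range p, μ j * t j :=
  (mul_le_mul_of_nonneg_left (sqrt_sum_sq_le_sum_sqrtGap_mul ht htp) ha.1).trans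
    (mul_sum_sqrtGap_mul_le ha ht htp)

lemma mul_rho_sq_le (ha : a ∈ sqrtMinorants μ p) :
    a * rho p ^ 2 ≤ ∑ j ∈ range p, μ j * sqrtGap j := by
  rw [rho_sq]
  simpa only [sq] using mul_sum_sqrtGap_mul_le ha antitone_sqrtGap (sqrtGap_nonneg p)

lemma mul_rho_le_sqrt_sum_sq (hp : 0 < p) (ha : a ∈ sqrtMinorants μ p) :
    a * rho p ≤ √(∑ j ∈ range p, μ j ^ 2) := by
  refine le_of_mul_le_mul_right ?_ (rho_pos hp)
  calc a * rho p * rho p = a * rho p ^ 2 := by ring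
    _ ≤ ∑ j ∈ range p, μ j * sqrtGap j := mul_rho_sq_le ha
    _ ≤ √(∑ j ∈ range p, μ j ^ 2) * rho p := Real.sum_mul_le_sqrt_mul_sqrt _ _ _

lemma sqrt_sum_sq_eq_mul_rho_iff (ha : a ∈ sqrtMinorants μ p) :
    √(∑ j ∈ range p, μ j ^ 2) = a * rho p ↔ ∀ j < p, μ j = a * sqrtGap j := by
  constructor
  · intro h
    have hsq : ∑ j ∈ range p, μ j ^ 2 = a ^ 2 * rho p ^ 2 := by
      rw [← mul_pow, ← h, Real.sq_sqrt (by positivity)]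
    have hzero : ∑ j ∈ range p, (μ j - a * sqrtGap j) ^ 2 ≤ 0 := by
      have hexp : ∑ j ∈ range p, (μ j - a * sqrtGap j) ^ 2 = ∑ j ∈ range p, μ j ^ 2 -
          2 * a * ∑ j ∈ range p, μ j * sqrtGap j + a ^ 2 * rho p ^ 2 := by
        simp only [rho_sq, mul_sum, ← sum_sub_distrib, ← sum_add_distrib]
        exact sum_congr rfl fun j _ => by ring
      rw [hexp, hsq]
      nlinarith [mul_rho_sq_le ha, ha.1]
    intro j hj
    have := (sum_eq_zero_iff_of_nonneg fun j _ => sq_nonneg (μ j - a * sqrtGap j)).1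
      (le_antisymm hzero (by positivity)) j (mem_range.2 hj)
    exact sub_eq_zero.1 (pow_eq_zero_iff two_ne_zero |>.1 this)
  · intro h
    have hρ : 0 ≤ a * rho p := mul_nonneg ha.1 (Real.sqrt_nonneg _)
    rw [← Real.sqrt_sq hρ, mul_pow, rho_sq, mul_sum]
    exact congrArg _ (sum_congr rfl fun j hj => by rw [h j (mem_range.1 hj), mul_pow])

lemma isGreatest_sqrtMinorants_of_eq_mul_sqrtGap (hp : 0 < p) (hc : 0 ≤ a)
    (h : ∀ j < p, μ j = a * sqrtGap j) : IsGreatest (sqrtMinorants μ p) a := by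
  have hsum : ∀ k ≤ p, ∑ j ∈ range k, μ j = a * √k := fun k hk => by
    rw [← sum_range_sqrtGap, mul_sum]
    exact sum_congr rfl fun j hj => h j ((mem_range.1 hj).trans_le hk)
  refine ⟨⟨hc, fun k hk => (hsum k hk).ge⟩, fun b hb => ?_⟩
  simpa using (hb.2 1 hp).trans_eq (hsum 1 hp)

end sqrtMinorants

noncomputable def revSeq {p : ℕ} (F : Fin p → ℝ) (j : ℕ) : ℝ :=
  if h : j < p then F (Fin.rev ⟨j, h⟩) else 0

section revSeq

variable {p : ℕ}

lemma revSeq_val_rev (F : Fin p → ℝ) (i : Fin p) : revSeq F (Fin.rev i) = F i := by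
  rw [revSeq, dif_pos (Fin.rev i).isLt, Fin.eta, Fin.rev_rev]

lemma revSeq_of_le (F : Fin p → ℝ) {j : ℕ} (hj : p ≤ j) : revSeq F j = 0 :=
  dif_neg hj.not_gt

lemma revSeq_mul (F G : Fin p → ℝ) (j : ℕ) :
    revSeq (fun i => F i * G i) j = revSeq F j * revSeq G j := by
  unfold revSeq; split_ifs <;> simp

lemma sum_range_revSeq (F : Fin p → ℝ) : ∑ j ∈ range p, revSeq F j = ∑ i, F i := by
  rw [← Fin.sum_univ_eq_sum_range, ← Equiv.sum_comp Fin.revPerm]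
  simp only [Fin.revPerm_apply, revSeq_val_rev]

lemma sum_range_revSeq_mul (F G : Fin p → ℝ) :
    ∑ j ∈ range p, revSeq F j * revSeq G j = ∑ i, F i * G i := by
  simp only [← revSeq_mul, sum_range_revSeq]

lemma revSeq_nonneg {F : Fin p → ℝ} (h0 : ∀ i, 0 ≤ F i) (j : ℕ) : 0 ≤ revSeq F j := by
  unfold revSeq; split_ifs
  exacts [h0 _, le_rfl]

lemma antitone_revSeq {F : Fin p → ℝ} (hF : Monotone F) (h0 : ∀ i, 0 ≤ F i) :
    Antitone (revSeq F) := by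
  intro i j hij
  by_cases hj : j < p
  · simp only [revSeq, hj, hij.trans_lt hj, dite_true]
    exact hF (Fin.rev_le_rev.2 hij)
  · exact (revSeq_of_le F (not_lt.1 hj)).trans_le (revSeq_nonneg h0 i)

lemma revSeq_lamQS {j : ℕ} (hj : j < p) : revSeq (lamQS p) j = sqrtGap j := by
  simp [revSeq, hj, lamQS, sqrtGap]

lemma forall_revSeq_eq_mul_sqrtGap_iff (F : Fin p → ℝ) (c : ℝ) :
    (∀ j < p, revSeq F j = c * sqrtGap j) ↔ ∀ i, F i = c * lamQS p i := by
  constructor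
  · intro h i
    have := h _ (Fin.rev i).isLt
    rwa [← revSeq_lamQS (Fin.rev i).isLt, revSeq_val_rev, revSeq_val_rev] at this
  · intro h j hj
    rw [← revSeq_lamQS hj]
    simp [revSeq, hj, h]

end revSeq

section sortedAbs

variable {p : ℕ}

lemma sortedAbs_monotone (β : Fin p → ℝ) : Monotone (sortedAbs β) :=
  Tuple.monotone_sort fun j => |β j|

lemma sum_sortedAbs_sq (β : Fin p → ℝ) : ∑ i, sortedAbs β i ^ 2 = ∑ i, β i ^ 2 := by
  simp only [sortedAbs, sq_abs]
  exact Equiv.sum_comp (Tuple.sort fun j => |β j|) fun i => β i ^ 2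

lemma sortedAbs_of_monotone {β : Fin p → ℝ} (hβ : Monotone β) (h0 : ∀ i, 0 ≤ β i) :
    sortedAbs β = β := by
  have hsort : β ∘ Tuple.sort β = β :=
    (Tuple.comp_sort_eq_comp_iff_monotone (σ := Equiv.refl _)).2 hβ |>.symm
  funext i
  simp only [sortedAbs, abs_of_nonneg (h0 _)]
  exact congrFun hsort i

lemma slopePen_eq_sum_revSeq (lam β : Fin p → ℝ) :
    slopePen lam β = ∑ j ∈ range p, revSeq lam j * revSeq (sortedAbs β) j :=
  (sum_range_revSeq_mul lam _).symm

end sortedAbs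

def sphereValues {p : ℕ} (lam : Fin p → ℝ) (r : ℝ) : Set ℝ :=
  {v | ∃ β : Fin p → ℝ, √(∑ i, β i ^ 2) = r ∧ v = slopePen lam β}

section sphereValues

variable {p : ℕ} {lam : Fin p → ℝ} {r : ℝ}

lemma isGreatest_sphereValues (hmono : Monotone lam) (hnonneg : ∀ i, 0 ≤ lam i)
    (hne : lam ≠ 0) (hr : 0 ≤ r) :
    IsGreatest (sphereValues lam r) (r * √(∑ i, lam i ^ 2)) := by
  set N := √(∑ i, lam i ^ 2)
  have hN : 0 < N := Real.sqrt_pos.2 <| by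
    obtain ⟨i, hi⟩ := Function.ne_iff.1 hne
    have hi : lam i ≠ 0 := hi
    exact sum_pos' (fun i _ => sq_nonneg _) ⟨i, mem_univ _, by positivity⟩
  have hNsq : N ^ 2 = ∑ i, lam i ^ 2 := Real.sq_sqrt (by positivity)
  refine ⟨⟨fun i => r / N * lam i, ?_, ?_⟩, ?_⟩
  · simp_rw [mul_pow, ← mul_sum, ← hNsq, div_pow]
    rw [div_mul_cancel₀ _ (by positivity), Real.sqrt_sq hr]
  · have hc : 0 ≤ r / N := by positivity
    rw [slopePen, sortedAbs_of_monotone (fun i j hij => mul_le_mul_of_nonneg_left (hmono hij) hc)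
      (fun i => mul_nonneg hc (hnonneg i))]
    simp_rw [mul_left_comm _ (r / N), ← mul_sum, ← sq, ← hNsq]
    field_simp
  · rintro v ⟨β, hβ, rfl⟩
    have := Real.sum_mul_le_sqrt_mul_sqrt univ lam (sortedAbs β)
    rwa [sum_sortedAbs_sq, hβ, mul_comm N] at this

lemma mul_le_of_mem_sphereValues {a : ℝ} (ha : a ∈ sqrtMinorants (revSeq lam) p) {v : ℝ}
    (hv : v ∈ sphereValues lam r) : a * r ≤ v := by
  obtain ⟨β, rfl, rfl⟩ := hv
  have ht := antitone_revSeq (sortedAbs_monotone β) (fun i => abs_nonneg _)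
  have := mul_sqrt_sum_sq_le ha ht (revSeq_of_le _ le_rfl).ge
  simp only [sq, sum_range_revSeq_mul] at this
  rw [slopePen, ← sum_sortedAbs_sq]
  simpa only [sq] using this

lemma div_sqrt_mul_sum_mem_sphereValues {k : ℕ} (hk : 0 < k) (hkp : k ≤ p) (hr : 0 ≤ r) :
    r / √k * ∑ j ∈ range k, revSeq lam j ∈ sphereValues lam r := by
  set c := r / √k
  set β : Fin p → ℝ := fun i => if (Fin.rev i : ℕ) < k then c else 0
  have h0 : ∀ i, 0 ≤ β i := fun i => by positivity
  have hmono : Monotone β := fun i j hij => by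
    by_cases hi : (Fin.rev i : ℕ) < k
    · have hj : (Fin.rev j : ℕ) < k := Nat.lt_of_le_of_lt (Fin.rev_le_rev.2 hij) hi
      simp only [β, if_pos hi, if_pos hj, le_refl]
    · exact (if_neg hi).trans_le (h0 j)
  have hβ : ∀ j, revSeq β j = if j < k then c else 0 := fun j => by
    by_cases hj : j < p
    · simp only [revSeq, dif_pos hj, Fin.rev_rev, β]
    · rw [revSeq_of_le _ (not_lt.1 hj), if_neg (by omega)]
  have hsum : ∀ g : ℕ → ℝ, ∑ j ∈ range p, g j * revSeq β j = c * ∑ j ∈ range k, g j := by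
    intro g
    rw [mul_sum, ← sum_subset (range_subset_range.2 hkp) fun j _ hj => by
      simp [hβ, not_lt.1 (mem_range.not.1 hj)]]
    exact sum_congr rfl fun j hj => by simp [hβ, mem_range.1 hj, mul_comm]
  refine ⟨β, ?_, ?_⟩
  · have hsq : ∑ i, β i ^ 2 = r ^ 2 := by
      simp only [sq]
      rw [← sum_range_revSeq_mul, hsum,
        sum_congr rfl (g := fun _ => c) fun j hj => by simp [hβ, mem_range.1 hj],
        sum_const, card_range, nsmul_eq_mul]
      have hk' : (0 : ℝ) < √k := Real.sqrt_pos.2 (Nat.cast_pos.2 hk)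
      simp only [c]
      field_simp
      rw [Real.sq_sqrt (Nat.cast_nonneg k)]
    rw [hsq, Real.sqrt_sq hr]
  · rw [slopePen_eq_sum_revSeq, sortedAbs_of_monotone hmono h0, hsum]

lemma isGreatest_sqrtMinorants_sInf_div (hp : 0 < p) (hnonneg : ∀ i, 0 ≤ lam i) (hr : 0 < r) :
    IsGreatest (sqrtMinorants (revSeq lam) p) (sInf (sphereValues lam r) / r) := by
  have hne : (sphereValues lam r).Nonempty :=
    ⟨_, div_sqrt_mul_sum_mem_sphereValues hp le_rfl hr.le⟩
  have hlow : ∀ a ∈ sqrtMinorants (revSeq lam) p, a * r ≤ sInf (sphereValues lam r) :=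
    fun a ha => le_csInf hne fun v hv => mul_le_of_mem_sphereValues ha hv
  have hzero : (0 : ℝ) ∈ sqrtMinorants (revSeq lam) p :=
    ⟨le_rfl, fun k _ => by simpa using sum_nonneg fun j _ => revSeq_nonneg hnonneg j⟩
  have hbdd : BddBelow (sphereValues lam r) :=
    ⟨0, fun v hv => by simpa using mul_le_of_mem_sphereValues hzero hv⟩
  refine ⟨⟨div_nonneg (by simpa using hlow 0 hzero) hr.le, fun k hk => ?_⟩,
    fun a ha => (le_div_iff₀ hr).2 (hlow a ha)⟩
  rcases k.eq_zero_or_pos with rfl | hk0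
  · simp
  have hk' : (0 : ℝ) < √k := Real.sqrt_pos.2 (Nat.cast_pos.2 hk0)
  have hle := csInf_le hbdd (div_sqrt_mul_sum_mem_sphereValues hk0 hk hr.le)
  rw [div_mul_eq_mul_div, div_le_iff₀ hr]
  calc sInf (sphereValues lam r) * √k ≤ r / √k * (∑ j ∈ range k, revSeq lam j) * √k := by gcongr
    _ = (∑ j ∈ range k, revSeq lam j) * r := by field_simp

end sphereValues

theorem stmt4 {p : ℕ} (hp : 0 < p) (lam : Fin p → ℝ) (hmono : Monotone lam)
    (hnonneg : ∀ i, 0 ≤ lam i) (hne : lam ≠ 0) (r : ℝ) (hr : 0 < r) :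
    rho p ≤
      sSup {v : ℝ | ∃ β : Fin p → ℝ, Real.sqrt (∑ i, (β i) ^ 2) = r ∧ v = slopePen lam β} /
      sInf {v : ℝ | ∃ β : Fin p → ℝ, Real.sqrt (∑ i, (β i) ^ 2) = r ∧ v = slopePen lam β} ∧
    (sSup {v : ℝ | ∃ β : Fin p → ℝ, Real.sqrt (∑ i, (β i) ^ 2) = r ∧ v = slopePen lam β} /
      sInf {v : ℝ | ∃ β : Fin p → ℝ, Real.sqrt (∑ i, (β i) ^ 2) = r ∧ v = slopePen lam β} = rho p ↔
      ∃ c : ℝ, 0 < c ∧ ∀ i, lam i = c * lamQS p i) := by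
  change rho p ≤ sSup (sphereValues lam r) / sInf (sphereValues lam r) ∧
    (sSup (sphereValues lam r) / sInf (sphereValues lam r) = rho p ↔ _)
  have hI := isGreatest_sqrtMinorants_sInf_div hp hnonneg hr
  set a := sInf (sphereValues lam r) / r
  have hmax : 0 < revSeq lam 0 := by
    obtain ⟨i, hi⟩ := Function.ne_iff.1 hne
    calc 0 < lam i := (hnonneg i).lt_of_ne' hi
      _ = revSeq lam (Fin.rev i) := (revSeq_val_rev lam i).symm
      _ ≤ revSeq lam 0 := antitone_revSeq hmono hnonneg (Nat.zero_le _)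
  have ha : 0 < a := (div_pos hmax (Real.sqrt_pos.2 (Nat.cast_pos.2 hp))).trans_le
    (hI.2 (div_sqrt_mem_sqrtMinorants (revSeq_nonneg hnonneg)))
  have hratio : sSup (sphereValues lam r) / sInf (sphereValues lam r) =
      √(∑ j ∈ range p, revSeq lam j ^ 2) / a := by
    have hinf : sInf (sphereValues lam r) = a * r := (div_mul_cancel₀ _ hr.ne').symm
    rw [(isGreatest_sphereValues hmono hnonneg hne hr.le).csSup_eq, hinf, mul_comm r,
      mul_div_mul_right _ _ hr.ne']
    simp only [sq, sum_range_revSeq_mul]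
  rw [hratio, le_div_iff₀ ha, div_eq_iff ha.ne', mul_comm (rho p),
    sqrt_sum_sq_eq_mul_rho_iff hI.1, forall_revSeq_eq_mul_sqrtGap_iff]
  refine ⟨mul_rho_le_sqrt_sum_sq hp hI.1, fun h => ⟨a, ha, h⟩, ?_⟩
  rintro ⟨c, hc, h⟩
  rwa [hI.unique (isGreatest_sqrtMinorants_of_eq_mul_sqrtGap hp hc.le
    ((forall_revSeq_eq_mul_sqrtGap_iff lam c).2 h))]
end

section
/- The SLOPE penalty J_λ(β) = ∑_{i=1}^p λ_i |β|_(i) with 0 ≤ λ₁ ≤ ... ≤ λ_p is a convex function of β; moreover, if λ₁ > 0 it is a norm on ℝ^p. -/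
open Finset

/-!
Sorting the absolute values increasingly and pairing them with the increasing weights `lam`
maximises `∑ i, lam i * |β (σ i)|` over all permutations `σ` (rearrangement inequality).
Hence `slopePen lam` is a maximum of seminorms when `lam ≥ 0`: it is absolutely homogeneous and
subadditive, so convex, and it is definite once every weight is positive.
-/

variable {p : ℕ}

lemma sortedAbs_nonneg (β : Fin p → ℝ) (i : Fin p) : 0 ≤ sortedAbs β i :=
  abs_nonneg _

lemma sortedAbs_eq_zero_iff {β : Fin p → ℝ} : sortedAbs β = 0 ↔ β = 0 := by
  constructor
  · intro h
    funext j
    have hj := congrFun h ((Tuple.sort fun k => |β k|).symm j)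
    simpa [sortedAbs] using hj
  · rintro rfl
    funext i
    simp [sortedAbs]

lemma sum_mul_abs_comp_perm_le_slopePen {lam : Fin p → ℝ} (hmono : Monotone lam)
    (β : Fin p → ℝ) (σ : Equiv.Perm (Fin p)) :
    ∑ i, lam i * |β (σ i)| ≤ slopePen lam β := by
  set s := Tuple.sort fun j => |β j|
  have hmv : Monovary lam (sortedAbs β) := hmono.monovary (Tuple.monotone_sort fun j => |β j|)
  calc ∑ i, lam i * |β (σ i)|
      = ∑ i, lam i * sortedAbs β ((s⁻¹ * σ) i) := by
        refine sum_congr rfl fun i _ => ?_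
        simp [sortedAbs, s]
    _ ≤ slopePen lam β := hmv.sum_mul_comp_perm_le_sum_mul

lemma slopePen_smul {lam : Fin p → ℝ} (hmono : Monotone lam) (c : ℝ) (β : Fin p → ℝ) :
    slopePen lam (c • β) = |c| * slopePen lam β := by
  apply le_antisymm
  · calc slopePen lam (c • β)
        = |c| * ∑ i, lam i * |β (Tuple.sort (fun j => |c • β j|) i)| := by
          simp only [slopePen, sortedAbs, mul_sum, Pi.smul_apply, smul_eq_mul, abs_mul]
          exact sum_congr rfl fun i _ => by ring
      _ ≤ |c| * slopePen lam β :=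
          mul_le_mul_of_nonneg_left (sum_mul_abs_comp_perm_le_slopePen hmono β _) (abs_nonneg c)
  · calc |c| * slopePen lam β
        = ∑ i, lam i * |(c • β) (Tuple.sort (fun j => |β j|) i)| := by
          simp only [slopePen, sortedAbs, mul_sum, Pi.smul_apply, smul_eq_mul, abs_mul]
          exact sum_congr rfl fun i _ => by ring
      _ ≤ slopePen lam (c • β) := sum_mul_abs_comp_perm_le_slopePen hmono (c • β) _

lemma slopePen_add_le {lam : Fin p → ℝ} (hmono : Monotone lam) (hnonneg : ∀ i, 0 ≤ lam i)
    (β γ : Fin p → ℝ) :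
    slopePen lam (β + γ) ≤ slopePen lam β + slopePen lam γ := by
  set s := Tuple.sort fun j => |(β + γ) j|
  calc slopePen lam (β + γ)
      = ∑ i, lam i * |β (s i) + γ (s i)| := rfl
    _ ≤ ∑ i, (lam i * |β (s i)| + lam i * |γ (s i)|) := by
        refine sum_le_sum fun i _ => ?_
        rw [← mul_add]
        exact mul_le_mul_of_nonneg_left (abs_add_le _ _) (hnonneg i)
    _ = ∑ i, lam i * |β (s i)| + ∑ i, lam i * |γ (s i)| := sum_add_distrib
    _ ≤ slopePen lam β + slopePen lam γ :=
        add_le_add (sum_mul_abs_comp_perm_le_slopePen hmono β s)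
          (sum_mul_abs_comp_perm_le_slopePen hmono γ s)

lemma convexOn_slopePen {lam : Fin p → ℝ} (hmono : Monotone lam) (hnonneg : ∀ i, 0 ≤ lam i) :
    ConvexOn ℝ Set.univ (slopePen lam) := by
  refine ⟨convex_univ, fun x _ y _ a b ha hb _ => ?_⟩
  calc slopePen lam (a • x + b • y)
      ≤ slopePen lam (a • x) + slopePen lam (b • y) := slopePen_add_le hmono hnonneg _ _
    _ = a * slopePen lam x + b * slopePen lam y := by
        rw [slopePen_smul hmono, slopePen_smul hmono, abs_of_nonneg ha, abs_of_nonneg hb]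

lemma slopePen_eq_zero_iff {lam : Fin p → ℝ} (hpos : ∀ i, 0 < lam i) {β : Fin p → ℝ} :
    slopePen lam β = 0 ↔ β = 0 := by
  rw [slopePen, sum_eq_zero_iff_of_nonneg fun i _ => mul_nonneg (hpos i).le (sortedAbs_nonneg β i),
    ← sortedAbs_eq_zero_iff, funext_iff]
  simp [(hpos _).ne']

theorem stmt9 {p : ℕ} (hp : 0 < p) (lam : Fin p → ℝ) (hmono : Monotone lam)
    (hnonneg : ∀ i, 0 ≤ lam i) :
    ConvexOn ℝ Set.univ (fun β : Fin p → ℝ => slopePen lam β) ∧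
    (0 < lam ⟨0, hp⟩ →
      (∀ β : Fin p → ℝ, slopePen lam β = 0 ↔ β = 0) ∧
      (∀ (c : ℝ) (β : Fin p → ℝ), slopePen lam (c • β) = |c| * slopePen lam β) ∧
      (∀ β γ : Fin p → ℝ, slopePen lam (β + γ) ≤ slopePen lam β + slopePen lam γ)) := by
  refine ⟨convexOn_slopePen hmono hnonneg, fun hlam₀ => ?_⟩
  have hpos : ∀ i, 0 < lam i := fun i => hlam₀.trans_le (hmono (Fin.mk_le_of_le_val i.val.zero_le))
  exact ⟨fun β => slopePen_eq_zero_iff hpos, slopePen_smul hmono, slopePen_add_le hmono hnonneg⟩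
end

section
/- Let f : ℝ^p → ℝ be convex and differentiable and let λ satisfy 0 ≤ λ₁ ≤ ... ≤ λ_p. Suppose β̂ ∈ ℝ^p and an ordering o of {1,...,p} sorts the vector (s_i ∇f_i(β̂)) within the level sets of |β̂| (where s_i = −sign(β̂_i) if β̂_i ≠ 0 and s_i = sign(∇f_i(β̂)) if β̂_i = 0) so that the groups of equal |β̂| are consecutive and |β̂| is nondecreasing along o. If for every group G_g with common absolute value β^G_g > 0 the equality ∑_{i∈G_g} λ_{rank(i)} = ∑_{i∈G_g} s_i ∇f_i(β̂) holds, and for every group g and every suffix of the group (including all suffixes of the zero group G₀) the partial tail sums satisfy ∑ λ − ∑ s∇f ≥ 0, then β̂ is a global minimizer of h(β) = f(β) + ∑_{i=1}^p λ_i |β|_(i). -/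
open Finset

/-!
`β̂` minimises `f + J`, `J` the sorted-ℓ¹ penalty, as soon as `-∇f(β̂)` is a subgradient of `J`
at `β̂`: `⟪-∇f, β̂⟫ = J β̂` and `⟪-∇f, β⟫ ≤ J β` for all `β`; convexity of `f` does the rest.
Write `D k = s (o k) * ∇f (o k)`. Since `s = -sign β̂` off `G₀`, the group equalities give
`J β̂ = ∑ λₖ |β̂ (o k)| = ∑ Dₖ |β̂ (o k)| = ⟪-∇f, β̂⟫`. For the inequality, `Dₖ = |∇f (o k)|`: on a
nonzero group the tail conditions and `λ ≥ 0` force `D ≥ 0`. The tail conditions, together with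
the monotonicity of `D` within groups and of `λ`, show that any `m` of the `Dₖ` sum to at most the
`m` largest `λ`s; Abel summation along the increasing order of `|β|` then gives
`∑ |∇f i| |β i| ≤ J β`.
-/

namespace Finset

variable {ι : Type*} [LinearOrder ι]

theorem exists_card_filter_le_eq (C : Finset ι) {c : ℕ} (hc : 0 < c) (hcC : c ≤ #C) :
    ∃ k ∈ C, #{j ∈ C | k ≤ j} = c := by
  induction c, hc using Nat.le_induction with
  | base =>
    have hC : C.Nonempty := card_pos.mp hcC
    refine ⟨C.max' hC, C.max'_mem hC, card_eq_one.mpr ⟨C.max' hC, ?_⟩⟩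
    ext j
    simp only [mem_filter, mem_singleton]
    exact ⟨fun ⟨hj, hle⟩ => le_antisymm (C.le_max' j hj) hle,
      by rintro rfl; exact ⟨C.max'_mem hC, le_rfl⟩⟩
  | succ c hc ih =>
    obtain ⟨k, hk, hcard⟩ := ih (by omega)
    have hlow : {j ∈ C | j < k}.Nonempty := by
      rw [← card_pos]
      have := card_filter_add_card_filter_not (s := C) (k ≤ ·)
      simp only [not_le] at this
      omega
    obtain ⟨k', hk'low, hk'max⟩ := exists_max_image _ id hlow
    obtain ⟨hk'C, hk'k⟩ := mem_filter.mp hk'low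
    refine ⟨k', hk'C, ?_⟩
    have hstep : {j ∈ C | k' ≤ j} = insert k' {j ∈ C | k ≤ j} := by
      ext j
      simp only [mem_filter, mem_insert]
      constructor
      · rintro ⟨hj, hle⟩
        by_cases hkj : k ≤ j
        · exact Or.inr ⟨hj, hkj⟩
        · exact Or.inl (le_antisymm (hk'max j (mem_filter.mpr ⟨hj, not_le.mp hkj⟩)) hle)
      · rintro (rfl | ⟨hj, hkj⟩)
        · exact ⟨hk'C, le_rfl⟩
        · exact ⟨hj, hk'k.le.trans hkj⟩
    rw [hstep, card_insert_of_notMem fun h => (mem_filter.mp h).2.not_gt hk'k, hcard]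

theorem sum_le_sum_of_card_eq {κ M : Type*} [AddCommMonoid M] [LinearOrder M]
    [IsOrderedCancelAddMonoid M] [DecidableEq κ] {s t : Finset κ} {g : κ → M}
    (hst : #s = #t) (hg : ∀ x ∈ s \ t, ∀ y ∈ t \ s, g x ≤ g y) :
    ∑ i ∈ s, g i ≤ ∑ i ∈ t, g i := by
  rw [← sum_sdiff_le_sum_sdiff]
  rcases (t \ s).eq_empty_or_nonempty with hts | hts
  · have hst' : s \ t = ∅ := card_eq_zero.mp ((card_sdiff_comm hst).trans (card_eq_zero.mpr hts))
    simp [hts, hst']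
  · calc ∑ i ∈ s \ t, g i ≤ #(s \ t) • (t \ s).inf' hts g :=
          sum_le_card_nsmul _ _ _ fun x hx => le_inf' _ _ fun y hy => hg x hx y hy
      _ = #(t \ s) • (t \ s).inf' hts g := by rw [card_sdiff_comm hst]
      _ ≤ ∑ i ∈ t \ s, g i := card_nsmul_le_sum _ _ _ fun y hy => inf'_le _ hy

theorem sum_mul_le_sum_mul_of_tail_sum_le {R : Type*} [CommRing R] [LinearOrder R]
    [IsOrderedRing R] {s : Finset ι} {a c y : ι → R} (hy : MonotoneOn y s)
    (hy0 : ∀ i ∈ s, 0 ≤ y i)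
    (htail : ∀ j ∈ s, ∑ i ∈ s with j ≤ i, a i ≤ ∑ i ∈ s with j ≤ i, c i) :
    ∑ i ∈ s, a i * y i ≤ ∑ i ∈ s, c i * y i := by
  induction s using Finset.induction_on_min generalizing y with
  | empty => simp
  | insert m s hm ih =>
    have hms : m ∉ s := fun h => lt_irrefl m (hm m h)
    have hsplit : ∀ e : ι → R, ∑ i ∈ insert m s, e i * y i
        = ∑ i ∈ s, e i * (y i - y m) + y m * ∑ i ∈ insert m s, e i := by
      intro e
      simp only [sum_insert hms, mul_sub, sum_sub_distrib, ← sum_mul]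
      ring
    have hfilter : ∀ j ∈ s, {i ∈ insert m s | j ≤ i} = {i ∈ s | j ≤ i} := fun j hj => by
      rw [filter_insert, if_neg (hm j hj).not_ge]
    have hall : {i ∈ insert m s | m ≤ i} = insert m s :=
      filter_true_of_mem fun i hi => (mem_insert.mp hi).elim ge_of_eq fun h => (hm i h).le
    rw [hsplit a, hsplit c]
    refine add_le_add (ih (fun i hi j hj hij => ?_) (fun i hi => ?_) fun j hj => ?_) ?_
    · exact sub_le_sub_right (hy (mem_insert_of_mem hi) (mem_insert_of_mem hj) hij) _
    · exact sub_nonneg.mpr (hy (mem_insert_self m s) (mem_insert_of_mem hi) (hm i hi).le)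
    · rw [← hfilter j hj]; exact htail j (mem_insert_of_mem hj)
    · refine mul_le_mul_of_nonneg_left ?_ (hy0 m (mem_insert_self m s))
      rw [← hall]; exact htail m (mem_insert_self m s)

theorem nonneg_of_tail_sum_nonneg {C : Finset ι} {lam D : ι → ℝ} (hD : MonotoneOn D C)
    (hlam : ∀ i ∈ C, 0 ≤ lam i) (hsum : ∑ i ∈ C, (lam i - D i) = 0)
    (htail : ∀ k ∈ C, 0 ≤ ∑ i ∈ C with k ≤ i, (lam i - D i)) {k : ι} (hk : k ∈ C) :
    0 ≤ D k := by
  -- If `D k < 0`, every term up to `k` is positive, while the terms after `k` form a tail.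
  by_contra! hneg
  have hhead : 0 < ∑ i ∈ C with i ≤ k, (lam i - D i) := by
    refine sum_pos (fun i hi => ?_) ⟨k, mem_filter.mpr ⟨hk, le_rfl⟩⟩
    obtain ⟨hiC, hik⟩ := mem_filter.mp hi
    linarith [hD hiC hk hik, hlam i hiC]
  have hrest : 0 ≤ ∑ i ∈ C with k < i, (lam i - D i) := by
    rcases ({i ∈ C | k < i}).eq_empty_or_nonempty with hempty | hne
    · rw [hempty, sum_empty]
    · obtain ⟨hmC, hkm⟩ := mem_filter.mp (min'_mem _ hne)
      convert htail _ hmC using 2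
      ext i
      simp only [mem_filter, and_congr_right_iff]
      exact fun hi => ⟨fun hki => min'_le _ i (mem_filter.mpr ⟨hi, hki⟩),
        fun hmi => hkm.trans_le hmi⟩
  have hsplit := sum_filter_add_sum_filter_not C (· ≤ k) fun i => lam i - D i
  simp only [not_le] at hsplit
  linarith

theorem exists_card_eq_sum_le_of_tail_sum_nonneg {C P : Finset ι} {lam D : ι → ℝ} (hPC : P ⊆ C)
    (hD : MonotoneOn D C) (htail : ∀ k ∈ C, 0 ≤ ∑ i ∈ C with k ≤ i, (lam i - D i)) :
    ∃ U ⊆ C, #U = #P ∧ ∑ i ∈ P, D i ≤ ∑ i ∈ U, lam i := by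
  rcases P.eq_empty_or_nonempty with rfl | hP
  · exact ⟨∅, empty_subset _, rfl, by simp⟩
  obtain ⟨k, hk, hcard⟩ := C.exists_card_filter_le_eq hP.card_pos (card_le_card hPC)
  refine ⟨{i ∈ C | k ≤ i}, filter_subset _ _, hcard, ?_⟩
  have hPU : ∑ i ∈ P, D i ≤ ∑ i ∈ C with k ≤ i, D i := by
    refine sum_le_sum_of_card_eq hcard.symm fun x hx y hy => ?_
    obtain ⟨hxP, hxU⟩ := mem_sdiff.mp hx
    obtain ⟨hyC, hky⟩ := mem_filter.mp (mem_sdiff.mp hy).1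
    have hxk : x < k := not_le.mp fun hkx => hxU (mem_filter.mpr ⟨hPC hxP, hkx⟩)
    exact hD (hPC hxP) hyC (hxk.le.trans hky)
  have := htail k hk
  rw [sum_sub_distrib] at this
  linarith

theorem sum_mul_eq_zero_of_sum_fiber_eq_zero {ι R : Type*} [Fintype ι]
    [NonUnitalNonAssocSemiring R] [DecidableEq R] (e w : ι → R)
    (h : ∀ k, w k ≠ 0 → ∑ j ∈ univ with w j = w k, e j = 0) : ∑ k, e k * w k = 0 := by
  rw [← sum_fiberwise_of_maps_to (fun k _ => mem_image_of_mem w (mem_univ k))]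
  refine sum_eq_zero fun v hv => ?_
  obtain ⟨k, -, rfl⟩ := mem_image.mp hv
  rw [sum_congr rfl fun j hj => by rw [(mem_filter.mp hj).2], ← sum_mul]
  by_cases hk : w k = 0
  · rw [hk, mul_zero]
  · rw [h k hk, zero_mul]

end Finset

section Fibers

variable {ι κ : Type*} [LinearOrder ι] [Fintype ι] [DecidableEq κ] {lam D : ι → ℝ} {w : ι → κ}

theorem monotoneOn_fiber (hD : ∀ i j, i ≤ j → w i = w j → D i ≤ D j) (v : κ) :
    MonotoneOn D ({i | w i = v} : Finset ι) := fun i hi j hj hij =>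
  hD i j hij ((mem_filter.mp hi).2.trans (mem_filter.mp hj).2.symm)

theorem tail_sum_nonneg_fiber
    (htail : ∀ k, 0 ≤ ∑ j ∈ univ with k ≤ j ∧ w j = w k, (lam j - D j)) (v : κ) :
    ∀ k ∈ ({i | w i = v} : Finset ι), 0 ≤ ∑ i ∈ {i | w i = v} with k ≤ i, (lam i - D i) := by
  intro k hk
  rw [filter_filter, ← (mem_filter.mp hk).2]
  simpa only [and_comm] using htail k

theorem sum_le_sum_of_isUpperSet (hlam : Monotone lam)
    (hD : ∀ i j, i ≤ j → w i = w j → D i ≤ D j)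
    (htail : ∀ k, 0 ≤ ∑ j ∈ univ with k ≤ j ∧ w j = w k, (lam j - D j))
    {S U : Finset ι} (hU : IsUpperSet (U : Set ι)) (hSU : #S = #U) :
    ∑ i ∈ S, D i ≤ ∑ i ∈ U, lam i := by
  choose V hVw hVcard hVsum using fun v =>
    exists_card_eq_sum_le_of_tail_sum_nonneg (filter_subset_filter (w · = v) (subset_univ S))
      (monotoneOn_fiber hD v) (tail_sum_nonneg_fiber htail v)
  have hdisj : (S.image w : Set κ).PairwiseDisjoint V := fun v _ v' _ hvv' =>
    disjoint_left.mpr fun i hi hi' =>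
      hvv' ((mem_filter.mp (hVw v hi)).2.symm.trans (mem_filter.mp (hVw v' hi')).2)
  have hcard : #((S.image w).biUnion V) = #U := by
    rw [card_biUnion hdisj, ← hSU, card_eq_sum_card_image w S]
    exact sum_congr rfl fun v _ => hVcard v
  calc ∑ i ∈ S, D i = ∑ v ∈ S.image w, ∑ i ∈ S with w i = v, D i :=
        (sum_fiberwise_of_maps_to (fun i hi => mem_image_of_mem w hi) _).symm
    _ ≤ ∑ v ∈ S.image w, ∑ i ∈ V v, lam i := sum_le_sum fun v _ => hVsum v
    _ = ∑ i ∈ (S.image w).biUnion V, lam i := (sum_biUnion hdisj).symm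
    _ ≤ ∑ i ∈ U, lam i := by
      refine sum_le_sum_of_card_eq hcard fun x hx y hy => hlam (le_of_lt (not_le.mp fun hyx => ?_))
      exact (mem_sdiff.mp hx).2 (hU hyx (mem_sdiff.mp hy).1)

end Fibers

theorem Real.sign_mul_self (x : ℝ) : Real.sign x * x = |x| := by
  rcases lt_trichotomy x 0 with hx | rfl | hx
  · rw [Real.sign_of_neg hx, abs_of_neg hx, neg_one_mul]
  · simp
  · rw [Real.sign_of_pos hx, abs_of_pos hx, one_mul]

theorem Real.sign_mul_abs (x : ℝ) : Real.sign x * |x| = x := by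
  rcases lt_trichotomy x 0 with hx | rfl | hx
  · rw [Real.sign_of_neg hx, abs_of_neg hx, neg_one_mul, neg_neg]
  · simp
  · rw [Real.sign_of_pos hx, abs_of_pos hx, one_mul]

theorem Real.abs_sign_of_ne_zero {x : ℝ} (hx : x ≠ 0) : |Real.sign x| = 1 := by
  rcases Real.sign_apply_eq_of_ne_zero x hx with h | h <;> simp [h]

theorem ContinuousLinearMap.apply_eq_sum_single {ι : Type*} [Fintype ι] [DecidableEq ι]
    (L : (ι → ℝ) →L[ℝ] ℝ) (v : ι → ℝ) : L v = ∑ i, v i * L (Pi.single i 1) := by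
  conv_lhs => rw [← univ_sum_single v]
  simp only [map_sum]
  refine sum_congr rfl fun i _ => ?_
  rw [← smul_eq_mul, ← map_smul, ← Pi.single_smul, smul_eq_mul, mul_one]

theorem ConvexOn.add_fderiv_sub_le {E : Type*} [NormedAddCommGroup E] [NormedSpace ℝ E]
    {f : E → ℝ} (hf : ConvexOn ℝ Set.univ f) {x : E} (hx : DifferentiableAt ℝ f x) (y : E) :
    f x + fderiv ℝ f x (y - x) ≤ f y := by
  have hline : ConvexOn ℝ Set.univ (f ∘ AffineMap.lineMap (k := ℝ) x y) := by
    simpa using hf.comp_affineMap (AffineMap.lineMap x y)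
  have hderiv : HasDerivAt (f ∘ AffineMap.lineMap (k := ℝ) x y) (fderiv ℝ f x (y - x)) 0 :=
    hx.hasFDerivAt.comp_hasDerivAt_of_eq 0 AffineMap.hasDerivAt_lineMap (by simp)
  have := hline.le_slope_of_hasDerivAt (Set.mem_univ 0) (Set.mem_univ 1) zero_lt_one hderiv
  simp only [slope_def_field, Function.comp_apply, AffineMap.lineMap_apply_one,
    AffineMap.lineMap_apply_zero, sub_zero, div_one] at this
  linarith

theorem ConvexOn.add_le_add_of_neg_fderiv_le {E : Type*} [NormedAddCommGroup E]
    [NormedSpace ℝ E] {f J : E → ℝ} (hf : ConvexOn ℝ Set.univ f) {x : E}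
    (hx : DifferentiableAt ℝ f x) (hJx : J x = -fderiv ℝ f x x) (hJ : ∀ y, -fderiv ℝ f x y ≤ J y)
    (y : E) : f x + J x ≤ f y + J y := by
  have := hf.add_fderiv_sub_le hx y
  rw [map_sub] at this
  linarith [hJ y]

theorem slopePen_eq_sum_of_monotone {p : ℕ} (lam β : Fin p → ℝ) {σ : Equiv.Perm (Fin p)}
    (hσ : Monotone fun k => |β (σ k)|) : slopePen lam β = ∑ k, lam k * |β (σ k)| := by
  have := (Tuple.comp_sort_eq_comp_iff_monotone (f := fun j => |β j|) (σ := σ)).mpr hσ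
  refine sum_congr rfl fun k _ => ?_
  have hk := congrFun this k
  simp only [Function.comp_apply] at hk
  rw [sortedAbs, hk]

theorem sum_mul_le_slopePen {p : ℕ} {lam g : Fin p → ℝ}
    (hg : ∀ S U : Finset (Fin p), IsUpperSet (U : Set (Fin p)) → #S = #U →
      ∑ i ∈ S, |g i| ≤ ∑ i ∈ U, lam i)
    (β : Fin p → ℝ) : ∑ i, g i * β i ≤ slopePen lam β := by
  set τ := Tuple.sort fun j => |β j|
  have htail (j : Fin p) : ∑ k ∈ univ with j ≤ k, |g (τ k)| ≤ ∑ k ∈ univ with j ≤ k, lam k := by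
    calc ∑ k ∈ univ with j ≤ k, |g (τ k)| = ∑ i ∈ (univ.filter (j ≤ ·)).map τ.toEmbedding, |g i| :=
          by rw [sum_map]; rfl
      _ ≤ _ := hg _ _ (by rw [coe_filter_univ]; exact isUpperSet_Ici j) (card_map _)
  calc ∑ i, g i * β i ≤ ∑ i, |g i| * |β i| :=
        sum_le_sum fun i _ => (le_abs_self _).trans (abs_mul _ _).le
    _ = ∑ k, |g (τ k)| * |β (τ k)| := (Equiv.sum_comp τ _).symm
    _ ≤ ∑ k, lam k * |β (τ k)| :=
        sum_mul_le_sum_mul_of_tail_sum_le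
          (fun i _ j _ hij => Tuple.monotone_sort (fun j => |β j|) hij)
          (fun _ _ => abs_nonneg _) fun j _ => htail j
    _ = slopePen lam β := rfl

theorem stmt12 {p : ℕ} (lam : Fin p → ℝ) (hmono : Monotone lam)
    (hnonneg : ∀ i, 0 ≤ lam i) (f : (Fin p → ℝ) → ℝ)
    (hconv : ConvexOn ℝ Set.univ f) (hdiff : Differentiable ℝ f)
    (b : Fin p → ℝ) (o : Equiv.Perm (Fin p))
    (grad : Fin p → ℝ) (hgrad : ∀ i, grad i = fderiv ℝ f b (Pi.single i 1))
    (s : Fin p → ℝ)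
    (hs : ∀ i, s i = if b i ≠ 0 then -Real.sign (b i) else Real.sign (grad i))
    (hosort : Monotone fun i => |b (o i)|)
    (hgsort : ∀ i j : Fin p, i ≤ j → |b (o i)| = |b (o j)| →
      s (o i) * grad (o i) ≤ s (o j) * grad (o j))
    (heq : ∀ i : Fin p, b (o i) ≠ 0 →
      ∑ j ∈ Finset.univ.filter (fun j => |b (o j)| = |b (o i)|),
        (lam j - s (o j) * grad (o j)) = 0)
    (hineq : ∀ k : Fin p,
      0 ≤ ∑ j ∈ Finset.univ.filter (fun j => k ≤ j ∧ |b (o j)| = |b (o k)|),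
        (lam j - s (o j) * grad (o j))) :
    ∀ β : Fin p → ℝ, f b + slopePen lam b ≤ f β + slopePen lam β := by
  set D : Fin p → ℝ := fun k => s (o k) * grad (o k)
  have hfd (v : Fin p → ℝ) : fderiv ℝ f b v = ∑ i, v i * grad i := by
    simp only [hgrad]
    exact (fderiv ℝ f b).apply_eq_sum_single v
  have hDabs (k : Fin p) : D k = |grad (o k)| := by
    by_cases hk : b (o k) = 0
    · simp only [D, hs, hk, ne_eq, not_true_eq_false, if_false, Real.sign_mul_self]
    · have hD0 : 0 ≤ D k := nonneg_of_tail_sum_nonneg (monotoneOn_fiber hgsort _)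
        (fun i _ => hnonneg i) (heq k hk) (tail_sum_nonneg_fiber hineq _)
        (mem_filter.mpr ⟨mem_univ k, rfl⟩)
      rw [← abs_of_nonneg hD0, abs_mul, hs, if_pos hk, abs_neg, Real.abs_sign_of_ne_zero hk,
        one_mul]
  have hDb (k : Fin p) : D k * |b (o k)| = -(b (o k) * grad (o k)) := by
    by_cases hk : b (o k) = 0
    · simp [hk]
    · simp only [D, hs, if_pos hk]
      linear_combination -grad (o k) * Real.sign_mul_abs (b (o k))
  have hgroups := sum_mul_eq_zero_of_sum_fiber_eq_zero (fun k => lam k - D k)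
    (fun k => |b (o k)|) fun k hk => heq k (abs_ne_zero.mp hk)
  simp only [sub_mul, sum_sub_distrib, sub_eq_zero] at hgroups
  refine hconv.add_le_add_of_neg_fderiv_le (hdiff b) ?_ fun β => ?_
  · rw [slopePen_eq_sum_of_monotone lam b hosort, hgroups, hfd, ← sum_neg_distrib,
      ← Equiv.sum_comp o fun i => -(b i * grad i)]
    exact sum_congr rfl fun k _ => hDb k
  · rw [hfd, ← sum_neg_distrib]
    refine le_of_eq_of_le (sum_congr rfl fun i _ => by ring)
      (sum_mul_le_slopePen (g := fun i => -grad i) (fun S U hU hSU => ?_) β)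
    calc ∑ i ∈ S, |-grad i| = ∑ k ∈ S.map o.symm.toEmbedding, D k := by
          simp [sum_map, hDabs]
      _ ≤ ∑ i ∈ U, lam i :=
          sum_le_sum_of_isUpperSet hmono hgsort hineq hU (by rw [card_map, hSU])
end

section
/- Under the setup of the SLOPE optimality conditions with strongly convex differentiable f, if the stationarity equality λ^G_{g,1} − ∇f^G_{g,1}(β̂) ≠ 0 fails for some nonzero group g, then β̂ is not a global minimizer of h(β) = f(β) + ∑ λ_i |β|_(i): perturbing all coordinates in group G_g by ±δ in the direction reducing the objective gives h(β̃) − h(β̂) = −|λ^G_{g,1} − ∇f^G_{g,1}(β̂)|δ + o(δ) < 0 for small δ > 0. -/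
/-!
Let `v > 0` be the common absolute value of the group and
`c = ∑_{group} (λ_j - s_j ∇_j f(b)) ≠ 0`. Replace `b i` by `b i - t · sign c · sign (b i)` on the
group, so that its absolute value becomes `v - t · sign c`. While `t` is below the gap between `v`
and the other values of `|b|`, the sorted order is unchanged, so the SLOPE penalty is affine in `t`
with slope `-sign c · ∑_{group} λ_j`, while `f` has derivative `sign c · ∑_{group} s_j ∇_j f(b)`
along this path. The objective thus has derivative `-sign c · c = -|c| < 0` at `t = 0`, and
decreases for small `t > 0`.
-/

open Finset

open Filter Topology

lemma Real.sign_mul_self_eq_abs (r : ℝ) : Real.sign r * r = |r| := by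
  rcases lt_trichotomy r 0 with hr | rfl | hr
  · rw [Real.sign_of_neg hr, abs_of_neg hr, neg_one_mul]
  · simp
  · rw [Real.sign_of_pos hr, abs_of_pos hr, one_mul]

lemma abs_add_mul_sign {x r : ℝ} (hx : x ≠ 0) (hr : -|x| ≤ r) :
    |x + r * Real.sign x| = |x| + r := by
  rcases hx.lt_or_gt with hx | hx
  · rw [Real.sign_of_neg hx, abs_of_neg hx] at *
    rw [abs_of_nonpos (by linarith)]
    ring
  · rw [Real.sign_of_pos hx, abs_of_pos hx] at *
    rw [abs_of_nonneg (by linarith)]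
    ring

lemma ContinuousLinearMap.apply_eq_sum_mul_single {ι : Type*} [Fintype ι] [DecidableEq ι]
    (L : (ι → ℝ) →L[ℝ] ℝ) (x : ι → ℝ) : L x = ∑ i, x i * L (Pi.single i 1) := by
  conv_lhs => rw [← Finset.univ_sum_single x]
  rw [map_sum]
  refine Finset.sum_congr rfl fun i _ => ?_
  rw [← smul_eq_mul, ← map_smul, ← Pi.single_smul', smul_eq_mul, mul_one]

lemma hasDerivAt_comp_add_smul {ι : Type*} [Fintype ι] [DecidableEq ι] {f : (ι → ℝ) → ℝ}
    {b : ι → ℝ} (hf : DifferentiableAt ℝ f b) (d : ι → ℝ) :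
    HasDerivAt (fun t : ℝ => f (b + t • d))
      (∑ i, d i * fderiv ℝ f b (Pi.single i 1)) 0 := by
  have hline : HasDerivAt (fun t : ℝ => b + t • d) d 0 := by
    simpa using ((hasDerivAt_id (0 : ℝ)).smul_const d).const_add b
  rw [← ContinuousLinearMap.apply_eq_sum_mul_single]
  exact hf.hasFDerivAt.comp_hasDerivAt_of_eq 0 hline (by simp)

lemma HasDerivAt.eventually_lt_of_neg {φ : ℝ → ℝ} {D x : ℝ} (h : HasDerivAt φ D x)
    (hD : D < 0) :
    ∀ᶠ t in 𝓝[>] 0, φ (x + t) < φ x := by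
  filter_upwards [h.tendsto_slope_zero_right.eventually_lt_const hD, self_mem_nhdsWithin]
    with t hslope (ht : 0 < t)
  rw [smul_eq_mul] at hslope
  have := mul_neg_of_pos_of_neg ht hslope
  rw [mul_inv_cancel_left₀ ht.ne'] at this
  linarith

lemma slopePen_eq_of_monotone {p : ℕ} (lam : Fin p → ℝ) {β : Fin p → ℝ}
    {σ : Equiv.Perm (Fin p)} (hσ : Monotone fun j => |β (σ j)|) :
    slopePen lam β = ∑ j, lam j * |β (σ j)| := by
  have hsort := congrFun ((Tuple.comp_sort_eq_comp_iff_monotone (f := fun j => |β j|)).mpr hσ)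
  exact Finset.sum_congr rfl fun j _ => congrArg (lam j * ·) (hsort j).symm

lemma monotone_shift_level {ι : Type*} [Preorder ι] {a : ι → ℝ} (ha : Monotone a)
    {v ε : ℝ} (hgap : ∀ j, a j ≠ v → |ε| < dist (a j) v) :
    Monotone fun j => if a j = v then v + ε else a j := by
  intro j k hjk
  have hle := ha hjk
  dsimp only
  split_ifs with hj hk hk
  · rfl
  · have hgt : v < a k := lt_of_le_of_ne (hj ▸ hle) (Ne.symm hk)
    have := hgap k hk
    rw [Real.dist_eq, abs_of_pos (sub_pos.2 hgt)] at this
    linarith [le_abs_self ε]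
  · have hlt : a j < v := lt_of_le_of_ne (hk ▸ hle) hj
    have := hgap j hj
    rw [Real.dist_eq, abs_of_neg (sub_neg.2 hlt)] at this
    linarith [neg_abs_le ε]
  · exact hle

lemma slopePen_shift_level {p : ℕ} (lam : Fin p → ℝ) {β β' : Fin p → ℝ}
    {σ : Equiv.Perm (Fin p)} (hσ : Monotone fun j => |β (σ j)|) {v ε : ℝ}
    (habs : ∀ i, |β' i| = if |β i| = v then v + ε else |β i|)
    (hgap : ∀ i, |β i| ≠ v → |ε| < dist |β i| v) :
    slopePen lam β' =
      slopePen lam β + ε * ∑ j ∈ univ.filter (fun j => |β (σ j)| = v), lam j := by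
  have hσ' : Monotone fun j => |β' (σ j)| := by
    simpa only [habs] using monotone_shift_level hσ fun j => hgap (σ j)
  rw [slopePen_eq_of_monotone lam hσ', slopePen_eq_of_monotone lam hσ, Finset.mul_sum,
    Finset.sum_filter, ← Finset.sum_add_distrib]
  refine Finset.sum_congr rfl fun j _ => ?_
  rw [habs]
  split_ifs with h
  · rw [h]; ring
  · ring

lemma eventually_slopePen_perturb_level {p : ℕ} (lam β : Fin p → ℝ) {σ : Equiv.Perm (Fin p)}
    (hσ : Monotone fun j => |β (σ j)|) {v : ℝ} (hv : 0 < v) (u : ℝ) :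
    ∀ᶠ t in 𝓝 0,
      slopePen lam (β + t • fun i => if |β i| = v then -(u * Real.sign (β i)) else 0) =
        slopePen lam β - t * (u * ∑ j ∈ univ.filter (fun j => |β (σ j)| = v), lam j) := by
  have hsmall : Tendsto (fun t : ℝ => |u * t|) (𝓝 0) (𝓝 0) := by
    simpa using ((continuous_const.mul continuous_id).abs.tendsto (0 : ℝ))
  have hgap : ∀ i, |β i| ≠ v → ∀ᶠ t in 𝓝 0, |u * t| < dist |β i| v := fun i hi =>
    hsmall.eventually (eventually_lt_nhds (dist_pos.2 hi))
  filter_upwards [hsmall.eventually (eventually_lt_nhds hv),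
    eventually_all.2 fun i => eventually_imp_distrib_left.2 (hgap i)] with t htv htgap
  rw [slopePen_shift_level lam hσ (ε := -(u * t)) ?_ (by simpa only [abs_neg] using htgap)]
  · ring
  intro i
  simp only [Pi.add_apply, Pi.smul_apply, smul_eq_mul]
  split_ifs with h
  · have hβ : β i ≠ 0 := abs_pos.1 (h ▸ hv)
    rw [show β i + t * -(u * Real.sign (β i)) = β i + -(u * t) * Real.sign (β i) by ring,
      abs_add_mul_sign hβ (by linarith [le_abs_self (u * t)]), h]
  · rw [mul_zero, add_zero]

theorem stmt13_general {p : ℕ} (lam : Fin p → ℝ) (f : (Fin p → ℝ) → ℝ) (hdiff : Differentiable ℝ f)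
    (b : Fin p → ℝ) (o : Equiv.Perm (Fin p))
    (grad : Fin p → ℝ) (hgrad : ∀ i, grad i = fderiv ℝ f b (Pi.single i 1))
    (s : Fin p → ℝ) (hs : ∀ i, b i ≠ 0 → s i = -Real.sign (b i))
    (hosort : Monotone fun i => |b (o i)|)
    (hfail : ∃ i : Fin p, b (o i) ≠ 0 ∧
      ∑ j ∈ Finset.univ.filter (fun j => |b (o j)| = |b (o i)|),
        (lam j - s (o j) * grad (o j)) ≠ 0) :
    ∃ β : Fin p → ℝ, f β + slopePen lam β < f b + slopePen lam b := by
  obtain ⟨i₀, hb₀, hc⟩ := hfail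
  set v := |b (o i₀)|
  have hv : 0 < v := abs_pos.2 hb₀
  set S := univ.filter fun j => |b (o j)| = v
  set c := ∑ j ∈ S, (lam j - s (o j) * grad (o j))
  set u := Real.sign c with hu
  set d : Fin p → ℝ := fun i => if |b i| = v then -(u * Real.sign (b i)) else 0 with hd
  have hdir : ∑ i, d i * grad i = u * ∑ j ∈ S, s (o j) * grad (o j) := by
    rw [← Equiv.sum_comp o, Finset.mul_sum, Finset.sum_filter]
    refine Finset.sum_congr rfl fun j _ => ?_
    simp only [hd]
    split_ifs with h
    · rw [hs _ (abs_pos.1 (h ▸ hv))]; ring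
    · rw [zero_mul]
  have hslope : ∑ i, d i * grad i - u * ∑ j ∈ S, lam j = -|c| := by
    have hc_eq : c = ∑ j ∈ S, lam j - ∑ j ∈ S, s (o j) * grad (o j) :=
      Finset.sum_sub_distrib ..
    rw [hdir, ← Real.sign_mul_self_eq_abs, ← hu, hc_eq]
    ring
  have hφ : HasDerivAt (fun t => f (b + t • d) - t * (u * ∑ j ∈ S, lam j)) (-|c|) 0 := by
    rw [← hslope]
    simp only [hgrad]
    exact (hasDerivAt_comp_add_smul (hdiff b) d).sub (hasDerivAt_mul_const _)
  obtain ⟨t, hdecr, hpen⟩ := ((hφ.eventually_lt_of_neg (neg_neg_of_pos (abs_pos.2 hc))).and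
    (nhdsWithin_le_nhds (eventually_slopePen_perturb_level lam b hosort hv u))).exists
  refine ⟨b + t • d, ?_⟩
  simp only [zero_add, zero_smul, add_zero, zero_mul, sub_zero] at hdecr
  rw [hpen]
  linarith

theorem stmt13 {p : ℕ} (lam : Fin p → ℝ) (hmono : Monotone lam)
    (hnonneg : ∀ i, 0 ≤ lam i) (f : (Fin p → ℝ) → ℝ) (m : ℝ) (hm : 0 < m)
    (hconv : StrongConvexOn Set.univ m f) (hdiff : Differentiable ℝ f)
    (b : Fin p → ℝ) (o : Equiv.Perm (Fin p))
    (grad : Fin p → ℝ) (hgrad : ∀ i, grad i = fderiv ℝ f b (Pi.single i 1))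
    (s : Fin p → ℝ) (hs : ∀ i, b i ≠ 0 → s i = -Real.sign (b i))
    (hosort : Monotone fun i => |b (o i)|)
    (hfail : ∃ i : Fin p, b (o i) ≠ 0 ∧
      ∑ j ∈ Finset.univ.filter (fun j => |b (o j)| = |b (o i)|),
        (lam j - s (o j) * grad (o j)) ≠ 0) :
    ∃ β : Fin p → ℝ, f β + slopePen lam β < f b + slopePen lam b :=
  stmt13_general lam f hdiff b o grad hgrad s hs hosort hfail
end

section
/- If two vectors β̃ and β̂ in ℝ^p satisfy ‖β̃ − β̂‖_∞ < (1/2)·min over consecutive distinct absolute-value levels of β̂ of their gap, then any permutation that sorts |β̃| in nondecreasing order also sorts |β̂| in nondecreasing order; consequently ∑_{i=1}^p λ_i(|β̃|_(i) − |β̂|_(i)) = ∑_{i=1}^p λ_i Δ_{õ(i)} where Δ = |β̃| − |β̂| and õ is an ordering sorting Δ within the groups of equal |β̂|, nondecreasing. -/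
open Finset

/-!
A perturbation of sup norm below half of every gap between distinct levels of `|β̂|` cannot
reverse the order of two coordinates in different levels. Hence every permutation sorting `|β̃|`
sorts `|β̂|`, and conversely a permutation sorting `|β̂|` whose ties are broken by
`Δ = |β̃| - |β̂|` also sorts `|β̃|`. Sorted vectors are unique, so both sorted absolute values are
read off through that one permutation and the two sums agree term by term.
-/

section HalfGap

variable {ι : Type*} {a b : ι → ℝ}

theorem lt_of_lt_of_abs_sub_lt_half_gap
    (hclose : ∀ i j, b i ≠ b j → ∀ k, |a k - b k| < |b i - b j| / 2) {i j : ι}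
    (hij : b i < b j) : a i < a j := by
  have hgap : |b i - b j| = b j - b i := by
    rw [abs_sub_comm]
    exact abs_of_pos (sub_pos.2 hij)
  have hi := (abs_lt.1 (hclose i j hij.ne i)).2
  have hj := (abs_lt.1 (hclose i j hij.ne j)).1
  rw [hgap] at hi hj
  linarith

theorem abs_sub_abs_lt_half_gap_of_abs_sub_lt_half_gap
    (hclose : ∀ i j, |b i| ≠ |b j| → ∀ k, |a k - b k| < |(|b i| - |b j|)| / 2) :
    ∀ i j, |b i| ≠ |b j| → ∀ k, |(|a k| - |b k|)| < |(|b i| - |b j|)| / 2 :=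
  fun i j hij k => (abs_abs_sub_abs_le_abs_sub _ _).trans_lt (hclose i j hij k)

end HalfGap

theorem sortedAbs_eq_of_monotone {p : ℕ} {β : Fin p → ℝ} {σ : Equiv.Perm (Fin p)}
    (hσ : Monotone fun i => |β (σ i)|) : sortedAbs β = fun i => |β (σ i)| :=
  Tuple.unique_monotone (f := fun j => |β j|) (Tuple.monotone_sort _) hσ

theorem stmt14_general {p : ℕ} (lam : Fin p → ℝ) (bhat btil : Fin p → ℝ)
    (hclose : ∀ i j : Fin p, |bhat i| ≠ |bhat j| →
      ∀ k, |btil k - bhat k| < |(|bhat i| - |bhat j|)| / 2) :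
    (∀ σ : Equiv.Perm (Fin p), (Monotone fun i => |btil (σ i)|) →
      Monotone fun i => |bhat (σ i)|) ∧
    (∀ σ : Equiv.Perm (Fin p), (Monotone fun i => |bhat (σ i)|) →
      (∀ i j : Fin p, i ≤ j → |bhat (σ i)| = |bhat (σ j)| →
        |btil (σ i)| - |bhat (σ i)| ≤ |btil (σ j)| - |bhat (σ j)|) →
      ∑ i, lam i * (sortedAbs btil i - sortedAbs bhat i) =
        ∑ i, lam i * (|btil (σ i)| - |bhat (σ i)|)) := by
  have hlt {i j : Fin p} : |bhat i| < |bhat j| → |btil i| < |btil j| :=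
    lt_of_lt_of_abs_sub_lt_half_gap (abs_sub_abs_lt_half_gap_of_abs_sub_lt_half_gap hclose)
  refine ⟨fun σ hσ i j hij => le_imp_le_of_lt_imp_lt hlt (hσ hij), fun σ hσ hties => ?_⟩
  have hσ' : Monotone fun i => |btil (σ i)| := by
    intro i j hij
    rcases (hσ hij).eq_or_lt with heq | hlt'
    · linarith [hties i j hij heq]
    · exact (hlt hlt').le
  rw [sortedAbs_eq_of_monotone hσ, sortedAbs_eq_of_monotone hσ']

theorem stmt14 {p : ℕ} (lam : Fin p → ℝ) (hmono : Monotone lam)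
    (hnonneg : ∀ i, 0 ≤ lam i) (bhat btil : Fin p → ℝ)
    (hclose : ∀ i j : Fin p, |bhat i| ≠ |bhat j| →
      ∀ k, |btil k - bhat k| < |(|bhat i| - |bhat j|)| / 2) :
    (∀ σ : Equiv.Perm (Fin p), (Monotone fun i => |btil (σ i)|) →
      Monotone fun i => |bhat (σ i)|) ∧
    (∀ σ : Equiv.Perm (Fin p), (Monotone fun i => |bhat (σ i)|) →
      (∀ i j : Fin p, i ≤ j → |bhat (σ i)| = |bhat (σ j)| →
        |btil (σ i)| - |bhat (σ i)| ≤ |btil (σ j)| - |bhat (σ j)|) →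
      ∑ i, lam i * (sortedAbs btil i - sortedAbs bhat i) =
        ∑ i, lam i * (|btil (σ i)| - |bhat (σ i)|)) :=
  stmt14_general lam bhat btil hclose
end

section
/- For OSCAR weights λ^OSCAR with λ^OSCAR_i = q + η(i−1), q, η ≥ 0, the SLOPE penalty ∑_{i=1}^p λ^OSCAR_i |β|_(i) equals q∑_{i=1}^p |β_i| + η∑_{j<k} max(|β_j|, |β_k|) for every β ∈ ℝ^p. -/
/-!
Sorting the absolute values changes neither side: the coordinate sum is permutation invariant, and
so is the sum of `max` over unordered pairs of distinct indices (a sum over the off-diagonal of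
`Sym2`). For an ascending vector `s` the pair `j < k` contributes `s k`, so `s k` is counted once
for each of the `k` indices below it; with `Fin` indices starting at `0`, this is the weight `η k`.
-/

open Finset

namespace Finset

variable {ι M : Type*} [Fintype ι] [AddCommMonoid M]

theorem sum_sum_lt_eq_sum_sym2_not_isDiag [LinearOrder ι] (f : Sym2 ι → M) :
    ∑ j, ∑ k ∈ univ.filter (fun k => j < k), f s(j, k) = ∑ z : Sym2 ι with ¬ z.IsDiag, f z := by
  have hlt : univ.offDiag.filter (fun i : ι × ι => i.1 < i.2) =
      univ.filter (fun i => i.1 < i.2) := by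
    ext i
    simpa using ne_of_lt
  rw [← sym2_univ, sum_sym2_filter_not_isDiag, hlt, sum_filter, ← univ_product_univ, sum_product]
  simp only [sum_filter]

theorem sum_sym2_not_isDiag_map_perm [DecidableEq ι] (f : Sym2 ι → M) (σ : Equiv.Perm ι) :
    ∑ z : Sym2 ι with ¬ z.IsDiag, f (z.map σ) = ∑ z : Sym2 ι with ¬ z.IsDiag, f z := by
  refine sum_nbij' (Sym2.map σ) (Sym2.map σ.symm) ?_ ?_ ?_ ?_ (fun _ _ => rfl) <;>
    simp [Sym2.isDiag_map σ.injective, Sym2.isDiag_map σ.symm.injective, Sym2.map_map]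

theorem sum_sum_lt_comp_perm_of_symm [LinearOrder ι] (g : ι → ι → M)
    (hg : ∀ j k, g j k = g k j) (σ : Equiv.Perm ι) :
    ∑ j, ∑ k ∈ univ.filter (fun k => j < k), g (σ j) (σ k) =
      ∑ j, ∑ k ∈ univ.filter (fun k => j < k), g j k := by
  have h := sum_sym2_not_isDiag_map_perm (Sym2.lift ⟨g, hg⟩) σ
  rw [← sum_sum_lt_eq_sum_sym2_not_isDiag, ← sum_sum_lt_eq_sum_sym2_not_isDiag] at h
  simpa only [Sym2.map_mk, Sym2.lift_mk] using h

end Finset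

theorem Monotone.sum_sum_lt_max_eq_sum_nsmul {n : ℕ} {M : Type*} [AddCommMonoid M]
    [LinearOrder M] {s : Fin n → M} (hs : Monotone s) :
    ∑ j, ∑ k ∈ univ.filter (fun k => j < k), max (s j) (s k) = ∑ k : Fin n, (k : ℕ) • s k := by
  calc ∑ j, ∑ k ∈ univ.filter (fun k => j < k), max (s j) (s k)
      = ∑ j, ∑ k ∈ univ.filter (fun k => j < k), s k :=
        sum_congr rfl fun j _ => sum_congr rfl fun k hk =>
          max_eq_right (hs (mem_filter.1 hk).2.le)
    _ = ∑ k, ∑ j ∈ univ.filter (fun j => j < k), s k :=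
        sum_comm' (by simp)
    _ = ∑ k : Fin n, (k : ℕ) • s k := by
        simp [filter_gt_eq_Iio, Fin.card_Iio]

theorem monotone_sortedAbs {p : ℕ} (β : Fin p → ℝ) : Monotone (sortedAbs β) :=
  Tuple.monotone_sort (fun j => |β j|)

theorem sum_sortedAbs {p : ℕ} (β : Fin p → ℝ) : ∑ i, sortedAbs β i = ∑ i, |β i| :=
  Equiv.sum_comp _ (fun j => |β j|)

theorem sum_sum_lt_max_sortedAbs {p : ℕ} (β : Fin p → ℝ) :
    ∑ j, ∑ k ∈ univ.filter (fun k => j < k), max (sortedAbs β j) (sortedAbs β k) =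
      ∑ j, ∑ k ∈ univ.filter (fun k => j < k), max |β j| |β k| :=
  sum_sum_lt_comp_perm_of_symm (fun j k => max |β j| |β k|) (fun _ _ => max_comm _ _) _

theorem stmt17_general {p : ℕ} (q η : ℝ) (β : Fin p → ℝ) :
    slopePen (fun i : Fin p => q + η * (i : ℝ)) β =
      q * ∑ i, |β i| + η * ∑ j, ∑ k ∈ Finset.univ.filter (fun k => j < k), max |β j| |β k| := by
  rw [← sum_sortedAbs, ← sum_sum_lt_max_sortedAbs,
    (monotone_sortedAbs β).sum_sum_lt_max_eq_sum_nsmul, slopePen]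
  simp only [add_mul, sum_add_distrib, mul_sum, nsmul_eq_mul, mul_assoc]

theorem stmt17 {p : ℕ} (q η : ℝ) (hq : 0 ≤ q) (hη : 0 ≤ η) (β : Fin p → ℝ) :
    slopePen (fun i : Fin p => q + η * (i : ℝ)) β =
      q * ∑ i, |β i| + η * ∑ j, ∑ k ∈ Finset.univ.filter (fun k => j < k), max |β j| |β k| :=
  stmt17_general q η β
end
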